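/- Let Σ₂ = {a,b} and w, w' ∈ Σ₂* with m := ι(w) = ι(w') < k. Then w ∼_k w' if and only if β_i = β_i' for all i ∈ [m] and α_i ∼_{k−m} α_i' for all i ∈ {0,1,…,m}, where α_i, β_i (resp. α_i', β_i') are the factors of the α-β-factorizations of w and w'. -/

import Mathlib

open List

variable {α : Type*} [DecidableEq α] [Fintype α]

/-- Simon `k`-congruence: `u` and `v` have the same scattered factors
(subsequences) of length at most `k`. -/
def SimonCongr (k : ℕ) (u v : List α) : Prop :=
  ∀ s : List α, s.length ≤ k → (s.Sublist u ↔ s.Sublist v)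

/-- `w` is `k`-universal with respect to the alphabet `S`: every word of length `k`
over `S` is a scattered factor of `w`. -/
def UniversalOn (S : Finset α) (k : ℕ) (w : List α) : Prop :=
  ∀ s : List α, s.length = k → (∀ x ∈ s, x ∈ S) → s.Sublist w

/-- The universality index of `w` w.r.t. the alphabet `S`. -/
noncomputable def iotaOn (S : Finset α) (w : List α) : ℕ :=
  sSup {k | UniversalOn S k w}

/-- The universality index of `w` w.r.t. the full alphabet. -/
noncomputable def iotaUniv (w : List α) : ℕ := iotaOn Finset.univ w

/-- `a` is an arch w.r.t. `S`: it contains every letter of `S`, and its last letter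
belongs to `S` and occurs exactly once in `a`. -/
def IsArchOn (S : Finset α) (a : List α) : Prop :=
  (∀ x ∈ S, x ∈ a) ∧ ∃ a' x, a = a' ++ [x] ∧ x ∈ S ∧ x ∉ a'

/-- `(ars, r)` is the arch factorization of `w` w.r.t. `S`. -/
def IsArchFactOn (S : Finset α) (w : List α) (ars : List (List α)) (r : List α) : Prop :=
  w = ars.flatten ++ r ∧ (∀ a ∈ ars, IsArchOn S a) ∧ ¬ (∀ x ∈ S, x ∈ r)

/-- `(A, B)` is the α-β-factorization of `w` with `m` arches:
`αᵢ₋₁βᵢ` (for `i ∈ [m]`) together with rest `α_m` is the arch factorization of `w`, and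
`(β_{m-i}α_{m-i})^R` together with rest `α₀^R` is the arch factorization of `w^R`. -/
def IsAlphaBetaFact (w : List α) (m : ℕ) (A B : ℕ → List α) : Prop :=
  IsArchFactOn Finset.univ w (List.ofFn fun i : Fin m => A i.val ++ B (i.val + 1)) (A m) ∧
  IsArchFactOn Finset.univ w.reverse
    (List.ofFn fun i : Fin m => (B (m - i.val) ++ A (m - i.val)).reverse) ((A 0).reverse)

/-- The concatenation `αᵢ βᵢ₊₁ αᵢ₊₁ ⋯ βⱼ αⱼ`. -/
def abSeg (A B : ℕ → List α) (i j : ℕ) : List α :=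
  A i ++ (((List.Ico (i + 1) (j + 1)).map fun l => B l ++ A l).flatten)

/-- The core of a `β`-factor: the factor with its first and last letter removed. -/
def coreOf (b : List α) : List α := (b.drop 1).dropLast

/-!
Over `{a, b}` an arch is `(!x)ᵖ x` with `p ≥ 1`. Hence every `αᵢ` is a power of one letter and
every `βᵢ` is `x` or `(!x) x`, and a word with `m + 1` arches is `w = (!x)ᴺ x v` where `v`
carries the remaining `m` arches, so `ι(v) = m`. We induct on the number of arches.

The letter `x` is an invariant of `∼ₖ`: if `w' = xᴺ' (!x) v'` instead, take `u` of length
`m + 1` absent from `v`. Then `x u` is absent from `w`, forcing `u` to be absent from `(!x) v'`,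
and so `(!x) u` is absent from `w'`, forcing `u` to be absent from `x v`; as `v` and `v'` are
`m`-universal, neither is possible. Stripping the common letter `x` gives `v ∼ₖ₋₁ v'`, which
yields all later factors; `β₁` is read off from whether `!x` occurs in `α₁`, and `α₀` is
isolated by the first letters of `β₁, …, β_m` used as right markers. Conversely, a scattered
factor `(!x)ᵃ t` of `w` either fits into the block `(!x)ᴺ` or spills over into `v`, where
`v ∼ₖ₋₁ v'` takes over; so the exponents `N`, `N'` only have to agree up to `k - m`.
-/

omit [DecidableEq α] [Fintype α]

namespace List

theorem cons_sublist_append_cons_iff_of_not_mem {x : α} {p t v : List α} (hx : x ∉ p) :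
    x :: t <+ p ++ x :: v ↔ t <+ v := by
  induction p with
  | nil => exact cons_sublist_cons
  | cons a p ih =>
    rw [mem_cons, not_or] at hx
    rw [cons_append, ← ih hx.2, sublist_cons_iff]
    simp [hx.1]

theorem append_singleton_sublist_append_cons_iff_of_not_mem {x : α} {t p v : List α}
    (hx : x ∉ v) : t ++ [x] <+ p ++ x :: v ↔ t <+ p := by
  rw [← reverse_sublist, ← reverse_sublist (l₁ := t)]
  simpa using cons_sublist_append_cons_iff_of_not_mem (t := t.reverse) (p := v.reverse)
    (v := p.reverse) (by simpa using hx)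

theorem Sublist.of_cons_of_head?_ne {a : α} {s t : List α} (h : s <+ a :: t)
    (hs : s.head? ≠ some a) : s <+ t := by
  rcases sublist_cons_iff.1 h with h | ⟨r, rfl, -⟩
  · exact h
  · simp at hs

theorem replicate_append_sublist_replicate_append_iff {c : α} {t z : List α}
    (ht : t.head? ≠ some c) (a N : ℕ) :
    replicate a c ++ t <+ replicate N c ++ z ↔ replicate (a - N) c ++ t <+ z := by
  induction N generalizing a with
  | zero => simp
  | succ N ih =>
    rcases a with _ | a
    · have ih0 := ih 0
      simp only [replicate_zero, nil_append, Nat.zero_sub] at ih0 ⊢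
      rw [replicate_succ, cons_append, ← ih0]
      exact ⟨fun h => h.of_cons_of_head?_ne (by simpa using ht), fun h => h.cons c⟩
    · rw [replicate_succ, replicate_succ, cons_append, cons_append, cons_sublist_cons, ih,
        Nat.succ_sub_succ]

theorem exists_eq_replicate_append (c : α) (s : List α) :
    ∃ a t, s = replicate a c ++ t ∧ t.head? ≠ some c := by
  induction s with
  | nil => exact ⟨0, [], rfl, by simp⟩
  | cons b s ih =>
    by_cases hb : b = c
    · obtain ⟨a, t, rfl, ht⟩ := ih
      exact ⟨a + 1, t, by rw [hb, replicate_succ, cons_append], ht⟩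
    · exact ⟨0, b :: s, rfl, by simpa using hb⟩

theorem sublist_append_of_forall_mem {p r : List α} {m : ℕ} (hp : ∀ y, y ∈ p)
    (hr : ∀ s : List α, s.length ≤ m → s <+ r) (s : List α) (hs : s.length ≤ m + 1) :
    s <+ p ++ r := by
  rcases s with _ | ⟨y, s⟩
  · exact nil_sublist _
  · exact (singleton_sublist.2 (hp y)).append (hr s (by simpa using hs))

theorem exists_of_append_eq_replicate_append_singleton {a b : List α} {c x : α} {p : ℕ}
    (hb : b ≠ []) (hab : a ++ b = replicate p c ++ [x]) :
    ∃ j ≤ p, a = replicate (p - j) c ∧ b = replicate j c ++ [x] := by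
  rcases append_eq_append_iff.1 hab with ⟨a', hc, rfl⟩ | ⟨c', rfl, hx⟩
  · obtain ⟨hlen, ha, ha'⟩ := replicate_eq_append_iff.1 hc
    exact ⟨a'.length, by omega, by rw [ha]; congr 1; omega, by rw [← ha']⟩
  · rcases append_eq_singleton_iff.1 hx.symm with ⟨rfl, rfl⟩ | ⟨-, rfl⟩
    · exact ⟨0, by omega, by simp, rfl⟩
    · exact absurd rfl hb

end List

open List

def SimonLe (k : ℕ) (u v : List α) : Prop :=
  ∀ s : List α, s.length ≤ k → s <+ u → s <+ v

namespace SimonCongr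

variable {k : ℕ} {u v : List α}

theorem symm (h : SimonCongr k u v) : SimonCongr k v u :=
  fun s hs => (h s hs).symm

theorem simonLe (h : SimonCongr k u v) : SimonLe k u v :=
  fun s hs => (h s hs).1

theorem of_simonLe (h : SimonLe k u v) (h' : SimonLe k v u) : SimonCongr k u v :=
  fun s hs => ⟨h s hs, h' s hs⟩

theorem of_cons_sublist_iff {c : α} {z z' : List α} (h : SimonCongr k u v)
    (hz : ∀ t, c :: t <+ u ↔ t <+ z) (hz' : ∀ t, c :: t <+ v ↔ t <+ z') :
    SimonCongr (k - 1) z z' := by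
  rintro (_ | ⟨y, t⟩) ht
  · simp
  · rw [← hz, ← hz']
    exact h _ (by simp only [length_cons] at ht ⊢; omega)

theorem min_eq_of_replicate {n n' : ℕ} {c : α}
    (h : SimonCongr k (replicate n c) (replicate n' c)) : min n k = min n' k := by
  have h₁ := ((h _ (by simp)).1 ((replicate_sublist_replicate c).2 (min_le_left n k))).length_le
  have h₂ := ((h _ (by simp)).2 ((replicate_sublist_replicate c).2 (min_le_left n' k))).length_le
  simp only [length_replicate] at h₁ h₂
  omega

end SimonCongr

theorem Bool.not_mem_replicate_not (x : Bool) (n : ℕ) : x ∉ replicate n (!x) := by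
  simp [mem_replicate]

/-- The two shapes of a `β`-factor `b` of a binary word between the `α`-factors `a` and `a'`,
when the arch `a b` ends in `x`. -/
def BinaryBeta (x : Bool) (a b a' : List Bool) : Prop :=
  (b = [x] ∧ (∃ n, 1 ≤ n ∧ a = replicate n (!x)) ∧ ∃ n, 1 ≤ n ∧ a' = replicate n (!x)) ∨
  (b = [!x, x] ∧ (∃ n, a = replicate n (!x)) ∧ ∃ n, a' = replicate n x)

namespace BinaryBeta

variable {x : Bool} {a b a' : List Bool}

theorem forall_mem (h : BinaryBeta x a b a') (y : Bool) : y ∈ b ++ a' := by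
  rcases h with ⟨rfl, -, n, hn, rfl⟩ | ⟨rfl, -, -⟩ <;> cases x <;> cases y <;>
    simp [mem_replicate]
  all_goals omega

theorem exists_append_eq (h : BinaryBeta x a b a') :
    ∃ N, 1 ≤ N ∧ a ++ b = replicate N (!x) ++ [x] := by
  rcases h with ⟨rfl, ⟨n, hn, rfl⟩, -⟩ | ⟨rfl, ⟨n, rfl⟩, -⟩
  · exact ⟨n, hn, rfl⟩
  · exact ⟨n + 1, by omega, by simp [replicate_succ']⟩

theorem exists_append_eq_cons (h : BinaryBeta x a b a') :
    ∃ suf, b ++ a' = b.headI :: suf ∧ b.headI ∉ suf := by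
  rcases h with ⟨rfl, -, n, -, rfl⟩ | ⟨rfl, -, n, rfl⟩
  · exact ⟨_, rfl, Bool.not_mem_replicate_not x n⟩
  · exact ⟨x :: replicate n x, rfl, by simp [mem_replicate]⟩

theorem mem_right_iff_eq_singleton (h : BinaryBeta x a b a') :
    (!x) ∈ a' ↔ b = [x] := by
  rcases h with ⟨rfl, -, n, hn, rfl⟩ | ⟨rfl, -, n, rfl⟩
  · simp [mem_replicate]; omega
  · simp [mem_replicate]

theorem eq_of_simonCongr {c c' b' : List Bool} {K : ℕ} (h : BinaryBeta x a b a')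
    (h' : BinaryBeta x c b' c') (hK : 1 ≤ K) (ha' : SimonCongr K a' c') : b = b' := by
  have hmem : (!x) ∈ a' ↔ (!x) ∈ c' := by
    simpa using ha' [!x] (by simpa using hK)
  rw [h.mem_right_iff_eq_singleton, h'.mem_right_iff_eq_singleton] at hmem
  rcases h with ⟨rfl, -⟩ | ⟨rfl, -⟩ <;> rcases h' with ⟨rfl, -⟩ | ⟨rfl, -⟩ <;> simp_all

theorem of_arches {d : Bool} {p q : ℕ}
    (ha : ∃ y n, a = replicate n y) (hp : 1 ≤ p) (harch : a ++ b = replicate p (!x) ++ [x])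
    (hq : 1 ≤ q) (hra : b ++ a' = d :: replicate q (!d)) : BinaryBeta x a b a' := by
  have hb : b ≠ [] := by
    rintro rfl
    obtain ⟨y, n, rfl⟩ := ha
    rw [append_nil] at harch
    have h₁ : x ∈ replicate n y := by simp [harch]
    have h₂ : (!x) ∈ replicate n y := by simp [harch, mem_replicate]; omega
    rw [mem_replicate] at h₁ h₂
    simp [← h₁.2] at h₂
  obtain ⟨j, hj, rfl, rfl⟩ := exists_of_append_eq_replicate_append_singleton hb harch
  rcases j with _ | j
  · obtain ⟨rfl, rfl⟩ : x = d ∧ a' = replicate q (!d) := by simpa using hra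
    exact .inl ⟨rfl, ⟨p, hp, rfl⟩, q, hq, rfl⟩
  · rw [replicate_succ, cons_append, cons_append, cons.injEq] at hra
    obtain ⟨rfl, hra⟩ := hra
    rw [Bool.not_not, append_assoc, append_eq_replicate_iff] at hra
    obtain ⟨-, hj, ha'⟩ := hra
    obtain rfl : j = 0 := by
      by_contra hj0
      have : (!x) ∈ replicate j (!x) := by simp [mem_replicate, hj0]
      rw [hj] at this
      simp [mem_replicate] at this
    exact .inr ⟨rfl, ⟨_, rfl⟩, _, (append_eq_replicate_iff.1 ha').2.2⟩

theorem exists_eq_replicate_right (h : BinaryBeta x a b a') : ∃ y n, a' = replicate n y := by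
  rcases h with ⟨-, -, n, -, rfl⟩ | ⟨-, -, n, rfl⟩ <;> exact ⟨_, n, rfl⟩

end BinaryBeta

/-- `β₁α₁⋯β_mα_m`, the product of the reversed arches. -/
def raWord : ℕ → (ℕ → List α) → (ℕ → List α) → List α
  | 0, _, _ => []
  | m + 1, A, B => B 1 ++ A 1 ++ raWord m (fun i => A (i + 1)) (fun i => B (i + 1))

def abWord (m : ℕ) (A B : ℕ → List α) : List α := A 0 ++ raWord m A B

theorem abWord_succ (m : ℕ) (A B : ℕ → List α) :
    abWord (m + 1) A B = A 0 ++ (B 1 ++ abWord m (fun i => A (i + 1)) (fun i => B (i + 1))) := by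
  simp [abWord, raWord]

theorem raWord_succ' (m : ℕ) (A B : ℕ → List α) :
    raWord (m + 1) A B = raWord m A B ++ (B (m + 1) ++ A (m + 1)) := by
  induction m generalizing A B with
  | zero => simp [raWord]
  | succ m ih =>
    rw [raWord, ih]
    simp [raWord]

theorem flatten_ofFn_append_eq_abWord (m : ℕ) (A B : ℕ → List α) :
    (ofFn fun i : Fin m => A i ++ B (i + 1)).flatten ++ A m = abWord m A B := by
  induction m generalizing A B with
  | zero => simp [abWord, raWord]
  | succ m ih =>
    rw [abWord_succ, ← ih, ofFn_succ]
    simp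

def betaHeads (m : ℕ) (B : ℕ → List Bool) : List Bool :=
  (range m).map fun i => (B (i + 1)).headI

theorem betaHeads_congr {m : ℕ} {B B' : ℕ → List Bool} (h : ∀ i, 1 ≤ i → i ≤ m → B i = B' i) :
    betaHeads m B = betaHeads m B' :=
  map_congr_left fun i hi => by rw [h (i + 1) (by omega) (by simp at hi; omega)]

def BinaryABShape (m : ℕ) (A B : ℕ → List Bool) : Prop :=
  (∀ i ≤ m, ∃ y n, A i = replicate n y) ∧ ∀ i < m, ∃ x, BinaryBeta x (A i) (B (i + 1)) (A (i + 1))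

namespace BinaryABShape

variable {m : ℕ} {A B : ℕ → List Bool}

theorem shift (h : BinaryABShape (m + 1) A B) :
    BinaryABShape m (fun i => A (i + 1)) (fun i => B (i + 1)) :=
  ⟨fun i hi => h.1 (i + 1) (by omega), fun i hi => h.2 (i + 1) (by omega)⟩

theorem restrict (h : BinaryABShape (m + 1) A B) : BinaryABShape m A B :=
  ⟨fun i hi => h.1 i (by omega), fun i hi => h.2 i (by omega)⟩

theorem sublist_raWord (h : BinaryABShape m A B) (s : List Bool) (hs : s.length ≤ m) :
    s <+ raWord m A B := by
  induction m generalizing A B s with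
  | zero => simp_all
  | succ m ih =>
    obtain ⟨x, hx⟩ := h.2 0 (by omega)
    rw [raWord]
    exact sublist_append_of_forall_mem hx.forall_mem (ih h.shift) s hs

theorem sublist_abWord (h : BinaryABShape m A B) (s : List Bool) (hs : s.length ≤ m) :
    s <+ abWord m A B :=
  (h.sublist_raWord s hs).trans (sublist_append_right _ _)

theorem cons_sublist_abWord (h : BinaryABShape m A B) {n : ℕ} {y : Bool}
    (hA : A 0 = replicate n y) (hn : 1 ≤ n) {u : List Bool} (hu : u.length ≤ m) :
    y :: u <+ abWord m A B := by
  obtain ⟨n, rfl⟩ : ∃ n', n = n' + 1 := ⟨n - 1, by omega⟩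
  rw [abWord, hA, replicate_succ, cons_append]
  exact ((h.sublist_raWord u hu).trans (sublist_append_right _ _)).cons_cons y

theorem abWord_succ_eq (h : BinaryABShape (m + 1) A B) :
    ∃ x N, 1 ≤ N ∧ BinaryBeta x (A 0) (B 1) (A 1) ∧
      abWord (m + 1) A B =
        replicate N (!x) ++ x :: abWord m (fun i => A (i + 1)) (fun i => B (i + 1)) := by
  obtain ⟨x, hx⟩ := h.2 0 (by omega)
  obtain ⟨N, hN, hAB⟩ := hx.exists_append_eq
  exact ⟨x, N, hN, hx, by rw [abWord_succ, ← append_assoc, hAB]; simp⟩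

theorem exists_not_sublist_abWord (h : BinaryABShape m A B) :
    ∃ u : List Bool, u.length = m + 1 ∧ ¬ u <+ abWord m A B := by
  induction m generalizing A B with
  | zero =>
    obtain ⟨y, n, hA⟩ := h.1 0 le_rfl
    refine ⟨[!y], rfl, ?_⟩
    simp [abWord, raWord, hA, mem_replicate]
  | succ m ih =>
    obtain ⟨x, N, -, -, hw⟩ := h.abWord_succ_eq
    obtain ⟨u, hu, hnu⟩ := ih h.shift
    refine ⟨x :: u, by simp [hu], ?_⟩
    rwa [hw, cons_sublist_append_cons_iff_of_not_mem (Bool.not_mem_replicate_not x N)]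

/-- The first letters of `β₁, …, β_m` serve as right markers that isolate `α₀`. -/
theorem sublist_alpha_zero_iff (h : BinaryABShape m A B) (t : List Bool) :
    t <+ A 0 ↔ t ++ betaHeads m B <+ abWord m A B := by
  induction m with
  | zero => simp [betaHeads, abWord, raWord]
  | succ m ih =>
    obtain ⟨x, hx⟩ := h.2 m (by omega)
    obtain ⟨suf, hsuf, hnot⟩ := hx.exists_append_eq_cons
    rw [abWord, raWord_succ', hsuf, betaHeads, range_succ, map_append, map_singleton,
      ← append_assoc, ← append_assoc, append_singleton_sublist_append_cons_iff_of_not_mem hnot]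
    exact ih h.restrict

end BinaryABShape

theorem IsArchOn.exists_eq_replicate_not_append {a : List Bool} (h : IsArchOn Finset.univ a) :
    ∃ x p, 1 ≤ p ∧ a = replicate p (!x) ++ [x] := by
  obtain ⟨hall, a', x, rfl, -, hx⟩ := h
  have ha' : a' = replicate a'.length (!x) :=
    eq_replicate_iff.2 ⟨rfl, fun y hy => Bool.eq_not_of_ne fun hyx => hx (hyx ▸ hy)⟩
  have hnx : (!x) ∈ a' := by simpa using hall (!x) (Finset.mem_univ _)
  exact ⟨x, a'.length, length_pos_of_mem hnx, by rw [← ha']⟩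

theorem exists_eq_replicate_of_not_forall_mem {r : List Bool}
    (h : ¬ ∀ x ∈ (Finset.univ : Finset Bool), x ∈ r) : ∃ y n, r = replicate n y := by
  obtain ⟨x, hx⟩ : ∃ x, x ∉ r := by simpa only [Finset.mem_univ, true_imp_iff, not_forall] using h
  exact ⟨!x, r.length,
    eq_replicate_iff.2 ⟨rfl, fun y hy => Bool.eq_not_of_ne fun hyx => hx (hyx ▸ hy)⟩⟩

namespace IsAlphaBetaFact

variable {w : List Bool} {m : ℕ} {A B : ℕ → List Bool}

theorem eq_abWord (h : IsAlphaBetaFact w m A B) : w = abWord m A B := by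
  rw [h.1.1, flatten_ofFn_append_eq_abWord]

theorem binaryABShape (h : IsAlphaBetaFact w m A B) : BinaryABShape m A B := by
  obtain ⟨⟨-, harch, -⟩, ⟨-, hrarch, hrest⟩⟩ := h
  have hbeta : ∀ i < m, (∃ y n, A i = replicate n y) →
      ∃ x, BinaryBeta x (A i) (B (i + 1)) (A (i + 1)) := by
    intro i hi ha
    obtain ⟨x, p, hp, harch⟩ :=
      (forall_mem_ofFn_iff.1 harch ⟨i, hi⟩).exists_eq_replicate_not_append
    obtain ⟨d, q, hq, hrarch⟩ :=
      (forall_mem_ofFn_iff.1 hrarch ⟨m - (i + 1), by omega⟩).exists_eq_replicate_not_append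
    rw [show m - (m - (i + 1)) = i + 1 by omega] at hrarch
    exact ⟨x, BinaryBeta.of_arches ha hp harch hq (by simpa using congrArg reverse hrarch)⟩
  have hunary : ∀ i ≤ m, ∃ y n, A i = replicate n y := by
    intro i hi
    induction i with
    | zero =>
      obtain ⟨y, n, hy⟩ := exists_eq_replicate_of_not_forall_mem hrest
      exact ⟨y, n, by simpa using congrArg reverse hy⟩
    | succ i ih =>
      obtain ⟨x, hx⟩ := hbeta i (by omega) (ih (by omega))
      exact hx.exists_eq_replicate_right
  exact ⟨hunary, fun i hi => hbeta i hi (hunary i hi.le)⟩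

end IsAlphaBetaFact

theorem simonLe_replicate_append_cons {k N N' κ : ℕ} {x : Bool} {v v' : List Bool}
    (hN : 1 ≤ N) (hmin : min N κ = min N' κ) (hv : SimonLe (k - 1) v v')
    (hc : ∀ u : List Bool, u.length < k - κ → (!x) :: u <+ v') :
    SimonLe k (replicate N (!x) ++ x :: v) (replicate N' (!x) ++ x :: v') := by
  intro s hs hsub
  obtain ⟨a, t, rfl, ht⟩ := exists_eq_replicate_append (!x) s
  have hlen : a + t.length ≤ k := by simpa using hs
  rw [replicate_append_sublist_replicate_append_iff ht] at hsub ⊢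
  have hsub' : replicate (a - N) (!x) ++ t <+ x :: v' := by
    by_cases ha : a ≤ N
    · rw [Nat.sub_eq_zero_of_le ha, replicate_zero, nil_append] at hsub ⊢
      rcases t with _ | ⟨y, t⟩
      · exact nil_sublist _
      · obtain rfl : y = x := by simpa using ht
        exact (hv t (by simp at hlen; omega) (cons_sublist_cons.1 hsub)).cons_cons y
    · have hv_sub : replicate (a - N) (!x) ++ t <+ v := by
        refine hsub.of_cons_of_head?_ne ?_
        rw [show a - N = a - N - 1 + 1 by omega, replicate_succ]
        simp
      exact (hv _ (by simp; omega) hv_sub).cons x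
  rcases le_or_gt N N' with hNN' | hNN'
  · exact ((replicate_sublist_replicate (!x)).2 (by omega)).append_right t |>.trans hsub'
  · by_cases ha : a ≤ N'
    · simpa [Nat.sub_eq_zero_of_le ha, Nat.sub_eq_zero_of_le (ha.trans hNN'.le)] using hsub'
    · rw [show a - N' = a - N' - 1 + 1 by omega, replicate_succ, cons_append]
      -- `N' < N` forces `κ ≤ N'`, so the part spilling over into `v'` is short enough for `hc`
      have hκ : κ ≤ N' := by omega
      exact (hc _ (by simp; omega)).cons x

theorem simonCongr_replicate_append_cons {k N N' κ : ℕ} {x : Bool} {v v' : List Bool}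
    (hN : 1 ≤ N) (hN' : 1 ≤ N') (hmin : min N κ = min N' κ) (hv : SimonCongr (k - 1) v v')
    (hc : ∀ u : List Bool, u.length < k - κ → (!x) :: u <+ v)
    (hc' : ∀ u : List Bool, u.length < k - κ → (!x) :: u <+ v') :
    SimonCongr k (replicate N (!x) ++ x :: v) (replicate N' (!x) ++ x :: v') :=
  .of_simonLe (simonLe_replicate_append_cons hN hmin hv.simonLe hc')
    (simonLe_replicate_append_cons hN' hmin.symm hv.symm.simonLe hc)

theorem not_simonCongr_replicate_append_cons {k m N N' : ℕ} {x : Bool} {v v' u : List Bool}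
    (hN : 1 ≤ N) (hN' : 1 ≤ N') (hk : m + 2 ≤ k)
    (hv : ∀ s : List Bool, s.length ≤ m → s <+ v)
    (hv' : ∀ s : List Bool, s.length ≤ m → s <+ v')
    (hu : u.length = m + 1) (hnu : ¬ u <+ v) :
    ¬ SimonCongr k (replicate N (!x) ++ x :: v) (replicate N' x ++ (!x) :: v') := by
  intro h
  obtain ⟨N, rfl⟩ : ∃ n, N = n + 1 := ⟨N - 1, by omega⟩
  obtain ⟨N', rfl⟩ : ∃ n, N' = n + 1 := ⟨N' - 1, by omega⟩
  have hx : ¬ u <+ (!x) :: v' := by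
    intro hsub
    have := (h (x :: u) (by simp; omega)).2
    rw [cons_sublist_append_cons_iff_of_not_mem (Bool.not_mem_replicate_not x _),
      replicate_succ, cons_append, cons_sublist_cons] at this
    exact hnu (this (hsub.trans (sublist_append_right _ _)))
  have hnx : ¬ u <+ x :: v := by
    intro hsub
    have := (h ((!x) :: u) (by simp; omega)).1
    rw [cons_sublist_append_cons_iff_of_not_mem (by simp [mem_replicate])] at this
    refine hx ((this ?_).trans (sublist_cons_self _ _))
    rw [replicate_succ, cons_append, cons_sublist_cons]
    exact hsub.trans (sublist_append_right _ _)
  rcases u with _ | ⟨y, u⟩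
  · simp at hu
  · have hu' : u.length ≤ m := by simp at hu; omega
    rcases Bool.eq_or_eq_not y x with rfl | rfl
    · exact hnx ((hv u hu').cons_cons _)
    · exact hx ((hv' u hu').cons_cons _)

namespace BinaryABShape

variable {m k : ℕ} {A B A' B' : ℕ → List Bool}

theorem simonCongr_abWord (h : BinaryABShape m A B) (h' : BinaryABShape m A' B') (hmk : m < k)
    (hB : ∀ i, 1 ≤ i → i ≤ m → B i = B' i) (hA : ∀ i ≤ m, SimonCongr (k - m) (A i) (A' i)) :
    SimonCongr k (abWord m A B) (abWord m A' B') := by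
  induction m generalizing k A B A' B' with
  | zero => simpa [abWord, raWord] using hA 0 le_rfl
  | succ m ih =>
    have hkm : k - 1 - m = k - (m + 1) := by omega
    have hv := ih h.shift h'.shift (k := k - 1) (by omega)
      (fun i h₁ h₂ => hB (i + 1) (by omega) (by omega)) (fun i hi => hkm ▸ hA (i + 1) (by omega))
    obtain ⟨x, hx⟩ := h.2 0 (by omega)
    obtain ⟨x', hx'⟩ := h'.2 0 (by omega)
    have hB1 := hB 1 le_rfl (by omega)
    have hA0 := hA 0 (by omega)
    rw [abWord_succ, abWord_succ]
    -- the two mixed cases contradict `β₁ = β₁'`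
    rcases hx with ⟨hb, ⟨n, hn, ha⟩, n₁, hn₁, ha₁⟩ | ⟨hb, ⟨n, ha⟩, -⟩ <;>
      rcases hx' with ⟨hb', ⟨n', hn', ha'⟩, n₁', hn₁', ha₁'⟩ | ⟨hb', ⟨n', ha'⟩, -⟩ <;>
      rw [hb, hb'] at hB1 <;> simp only [cons.injEq, reduceCtorEq, and_true, and_false] at hB1
    · subst hB1
      rw [ha, ha'] at hA0
      rw [ha, ha', hb, hb', singleton_append, singleton_append]
      exact simonCongr_replicate_append_cons hn hn' hA0.min_eq_of_replicate hv
        (fun u hu => h.shift.cons_sublist_abWord ha₁ hn₁ (by omega))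
        (fun u hu => h'.shift.cons_sublist_abWord ha₁' hn₁' (by omega))
    · obtain rfl : x = x' := by simpa using hB1
      rw [ha, ha'] at hA0
      have hmin := hA0.min_eq_of_replicate
      have hw : ∀ (n : ℕ) (v : List Bool),
          replicate n (!x) ++ ([!x, x] ++ v) = replicate (n + 1) (!x) ++ x :: v := by
        simp [replicate_succ']
      rw [ha, ha', hb, hb', hw, hw]
      exact simonCongr_replicate_append_cons (κ := k - m) (by omega) (by omega) (by omega) hv
        (fun u hu => h.shift.sublist_abWord _ (by simp; omega))
        (fun u hu => h'.shift.sublist_abWord _ (by simp; omega))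

theorem eq_of_simonCongr_abWord (h : BinaryABShape m A B) (h' : BinaryABShape m A' B')
    (hmk : m < k) (hsc : SimonCongr k (abWord m A B) (abWord m A' B')) :
    (∀ i, 1 ≤ i → i ≤ m → B i = B' i) ∧ ∀ i ≤ m, SimonCongr (k - m) (A i) (A' i) := by
  induction m generalizing k A B A' B' with
  | zero =>
    refine ⟨fun i _ _ => by omega, fun i hi => ?_⟩
    obtain rfl : i = 0 := by omega
    simpa [abWord, raWord] using hsc
  | succ m ih =>
    obtain ⟨x, N, hN, hx, hw⟩ := h.abWord_succ_eq
    obtain ⟨x', N', hN', hx', hw'⟩ := h'.abWord_succ_eq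
    obtain rfl : x = x' := by
      by_contra hne
      obtain ⟨u, hu, hnu⟩ := h.shift.exists_not_sublist_abWord
      rw [Bool.eq_not_of_ne (Ne.symm hne), Bool.not_not] at hw'
      rw [hw, hw'] at hsc
      exact not_simonCongr_replicate_append_cons hN hN' (by omega) h.shift.sublist_abWord
        h'.shift.sublist_abWord hu hnu hsc
    have hv := hsc.of_cons_sublist_iff (c := x)
      (fun t => hw ▸ cons_sublist_append_cons_iff_of_not_mem (Bool.not_mem_replicate_not x N))
      (fun t => hw' ▸ cons_sublist_append_cons_iff_of_not_mem (Bool.not_mem_replicate_not x N'))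
    obtain ⟨hB, hA⟩ := ih h.shift h'.shift (by omega) hv
    have hkm : k - 1 - m = k - (m + 1) := by omega
    have hB1 : B 1 = B' 1 := hx.eq_of_simonCongr hx' (by omega) (hkm ▸ hA 0 (by omega))
    have hBeq : ∀ i, 1 ≤ i → i ≤ m + 1 → B i = B' i := by
      rintro (_ | _ | i) h₁ h₂
      · omega
      · exact hB1
      · exact hB (i + 1) (by omega) (by omega)
    refine ⟨hBeq, ?_⟩
    rintro (_ | i) hi
    · intro t ht
      rw [h.sublist_alpha_zero_iff, h'.sublist_alpha_zero_iff, betaHeads_congr hBeq]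
      exact hsc _ (by simp [betaHeads]; omega)
    · exact hkm ▸ hA i (by omega)

theorem simonCongr_abWord_iff (h : BinaryABShape m A B) (h' : BinaryABShape m A' B')
    (hmk : m < k) :
    SimonCongr k (abWord m A B) (abWord m A' B') ↔
      (∀ i, 1 ≤ i → i ≤ m → B i = B' i) ∧ ∀ i ≤ m, SimonCongr (k - m) (A i) (A' i) :=
  ⟨h.eq_of_simonCongr_abWord h' hmk, fun ⟨hB, hA⟩ => h.simonCongr_abWord h' hmk hB hA⟩

end BinaryABShape

theorem binary_simonCongr_characterization_general (k m : ℕ) (w w' : List Bool)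
    (A B A' B' : ℕ → List Bool)
    (hw : IsAlphaBetaFact w m A B) (hw' : IsAlphaBetaFact w' m A' B')
    (hmk : m < k) :
    SimonCongr k w w' ↔
      ((∀ i, 1 ≤ i → i ≤ m → B i = B' i) ∧
       (∀ i ≤ m, SimonCongr (k - m) (A i) (A' i))) := by
  rw [hw.eq_abWord, hw'.eq_abWord]
  exact hw.binaryABShape.simonCongr_abWord_iff hw'.binaryABShape hmk

/-- characterization of Simon's congruence for binary words. -/
theorem binary_simonCongr_characterization (k m : ℕ) (w w' : List Bool)
    (A B A' B' : ℕ → List Bool)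
    (hw : IsAlphaBetaFact w m A B) (hw' : IsAlphaBetaFact w' m A' B')
    (hiw : iotaUniv w = m) (hiw' : iotaUniv w' = m) (hmk : m < k) :
    SimonCongr k w w' ↔
      ((∀ i, 1 ≤ i → i ≤ m → B i = B' i) ∧
       (∀ i ≤ m, SimonCongr (k - m) (A i) (A' i))) :=
  binary_simonCongr_characterization_general k m w w' A B A' B' hw hw' hmk
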